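/- arXiv:1702.06096 — 2 statements merged into one kernel-verified Lean document; each statement's English description precedes it below -/
import Mathlib

section
/- Let R ⊆ Q[[q]] be the smallest subring containing Q, L, L^{-1} and X. Then R is closed under the derivation D = q·d/dq; explicitly, D L = (L^4 − L)/3 and D X = (L^3 − 1)·X − X^2 + (2/9)·(L^3 − 1), so the differential ring generated over Q[L, L^{-1}] by X, DX, DDX, … equals the polynomial ring Q[L, L^{-1}][X]. -/
/-- The operator `D = q·d/dq` on formal power series. -/
noncomputable def qD (F : PowerSeries ℚ) : PowerSeries ℚ :=
  PowerSeries.mk fun n => (n : ℚ) * PowerSeries.coeff n F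

/-- `C1 = 1 + 3·∑_{d≥1} (-1)^d·d·(3d-1)!/(d!)^3·q^d`. -/
noncomputable def C1series : PowerSeries ℚ :=
  PowerSeries.mk fun d =>
    if d = 0 then 1
    else 3 * (-1) ^ d * d * (Nat.factorial (3 * d - 1) : ℚ) / ((Nat.factorial d : ℚ)) ^ 3

/-!
Differentiating `L³(1 + 27q) = 1`, with `Dq = q`, gives `3 DL = L⁴ - L`. The coefficients of `C1`
satisfy the two-term recurrence `(n+1)² c_{n+1} = -3(3n+1)(3n+2) c_n`, which is the Picard–Fuchs
equation `(1 + 27q) D²C + 27q DC + 6q C = 0`. Multiplying it by `L³` and using `27qL³ = 1 - L³`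
gives `D²C = (L³ - 1)(DC + 2C/9)`; since `DC = XC` and `D²C = (DX + X²)C`, cancelling `C` yields
the Riccati equation for `X`. So the derivation `D` maps the generators `L`, `L⁻¹`
(`DL⁻¹ = -L⁻² DL`) and `X` into `R = ℚ[L, L⁻¹, X]`, hence maps `R` into itself by the Leibniz
rule, and all iterates `DⁿX` lie in `R`.
-/

namespace Derivation

theorem map_mem_adjoin_of_map_mem {R A : Type*} [CommRing R] [CommRing A] [Algebra R A]
    (D : Derivation R A A) {s : Set A}
    (hs : ∀ x ∈ s, D x ∈ Algebra.adjoin R s) {a : A} (ha : a ∈ Algebra.adjoin R s) :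
    D a ∈ Algebra.adjoin R s := by
  induction ha using Algebra.adjoin_induction with
  | mem x hx => exact hs x hx
  | algebraMap r => simp
  | add x y _ _ hx hy => simpa using add_mem hx hy
  | mul x y hx' hy' hx hy => simpa using add_mem (mul_mem hx' hy) (mul_mem hy' hx)

variable {A : Type*} [CommRing A] [Algebra ℚ A] (D : Derivation ℚ A A)

theorem map_eq_of_pow_three_mul_eq_one {q L : A} (hq : D q = q) (hL : L ^ 3 * (1 + 27 * q) = 1) :
    D L = (1 / 3 : ℚ) • (L ^ 4 - L) := by
  have h27 : D 27 = 0 := by simpa using D.map_natCast 27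
  have h := congrArg D hL
  simp only [leibniz, leibniz_pow, map_add, map_one_eq_zero, h27, hq, smul_eq_mul, nsmul_eq_mul,
    Nat.cast_ofNat, zero_add] at h
  have key : (3 : ℚ) • D L = L ^ 4 - L := by
    rw [ofNat_smul_eq_nsmul, nsmul_eq_mul]
    linear_combination L * h + (-3 * D L - L) * hL
  rw [← key, smul_smul]
  norm_num

theorem riccati_of_mul_eq_map [IsDomain A] {q L C X : A} (hL : L ^ 3 * (1 + 27 * q) = 1)
    (hC : (1 + 27 * q) * D (D C) + 27 * q * D C + 6 * q * C = 0) (hC0 : C ≠ 0)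
    (hX : X * C = D C) :
    D X = (L ^ 3 - 1) * X - X ^ 2 + (2 / 9 : ℚ) • (L ^ 3 - 1) := by
  have h9 : (9 : A) * algebraMap ℚ A (2 / 9) = 2 := by
    rw [← map_ofNat (algebraMap ℚ A) 9, ← map_mul]; norm_num [map_ofNat]
  have hDX : D X * C + X * D C = D (D C) := by
    simpa [leibniz, add_comm, mul_comm] using congrArg D hX
  rw [Algebra.smul_def]
  refine mul_right_cancel₀ hC0 ?_
  linear_combination hDX + X * hX - (L ^ 3 - 1) * hX + L ^ 3 * hC
    - (D (D C) + D C + algebraMap ℚ A (2 / 9) * C) * hL + 3 * q * L ^ 3 * C * h9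

end Derivation

theorem Algebra.adjoin_union_range_iterate_eq {R A : Type*} [CommSemiring R] [Semiring A]
    [Algebra R A] {f : A → A} {t : Set A} {x : A}
    (hf : ∀ a ∈ Algebra.adjoin R (t ∪ {x}), f a ∈ Algebra.adjoin R (t ∪ {x})) :
    Algebra.adjoin R (t ∪ Set.range fun n => f^[n] x) = Algebra.adjoin R (t ∪ {x}) := by
  refine le_antisymm (Algebra.adjoin_le (Set.union_subset ?_ ?_)) (Algebra.adjoin_mono ?_)
  · exact Set.subset_union_left.trans Algebra.subset_adjoin
  · rintro _ ⟨n, rfl⟩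
    induction n with
    | zero => exact Algebra.subset_adjoin (Set.mem_union_right _ rfl)
    | succ n ih =>
      simp only [Function.iterate_succ_apply']
      exact hf _ ih
  · exact Set.union_subset_union_right _ (Set.singleton_subset_iff.mpr ⟨0, rfl⟩)

section

open PowerSeries

noncomputable def qDerivation : Derivation ℚ ℚ⟦X⟧ ℚ⟦X⟧ := (X : ℚ⟦X⟧) • derivative ℚ

theorem coe_qDerivation : ⇑qDerivation = qD := by
  funext F
  ext (_ | n)
  · simp [qDerivation, qD]
  · simp only [qDerivation, Derivation.coe_smul, Pi.smul_apply, smul_eq_mul, coeff_succ_X_mul,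
      coeff_derivative, qD, coeff_mk, Nat.cast_add, Nat.cast_one]
    ring

theorem qDerivation_X : qDerivation X = X := by
  simp [qDerivation]

theorem coeff_succ_C1series (n : ℕ) :
    ((n : ℚ) + 1) ^ 2 * coeff (n + 1) C1series
      = -3 * (3 * n + 1) * (3 * n + 2) * coeff n C1series := by
  rcases n with _ | k
  · norm_num [C1series]
  · simp only [C1series, coeff_mk, if_neg (Nat.succ_ne_zero _)]
    rw [show 3 * (k + 1 + 1) - 1 = 3 * k + 2 + 3 by omega,
      show 3 * (k + 1) - 1 = 3 * k + 2 by omega]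
    simp only [Nat.factorial_succ (k + 1), Nat.factorial_succ (3 * k + 2 + 2),
      Nat.factorial_succ (3 * k + 2 + 1), Nat.factorial_succ (3 * k + 2)]
    have : ((3 * k + 2).factorial : ℚ) ≠ 0 := by positivity
    have : ((k + 1).factorial : ℚ) ≠ 0 := by positivity
    field_simp
    push_cast
    ring

theorem C1series_ode :
    (1 + 27 * X) * qDerivation (qDerivation C1series) + 27 * X * qDerivation C1series
      + 6 * X * C1series = 0 := by
  rw [coe_qDerivation, ← map_ofNat C 27, ← map_ofNat C 6]
  ext (_ | n)
  · simp [qD]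
  · simp only [qD, coeff_mk, add_mul, one_mul, mul_assoc, mul_left_comm _ X, map_add,
      Nat.cast_add, Nat.cast_one, coeff_succ_X_mul, coeff_C_mul, map_zero]
    linear_combination coeff_succ_C1series n

theorem C1series_ne_zero : C1series ≠ 0 := by
  intro h
  simpa [C1series] using congrArg (coeff 0) h

end

theorem stmt_1_general (L Linv X : PowerSeries ℚ)
    (hL : L ^ 3 * (1 + 27 * PowerSeries.X) = 1)
    (hLinv : L * Linv = 1)
    (hX : X * C1series = qD C1series) :
    qD L = (1 / 3 : ℚ) • (L ^ 4 - L) ∧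
    qD X = (L ^ 3 - 1) * X - X ^ 2 + (2 / 9 : ℚ) • (L ^ 3 - 1) ∧
    (∀ F ∈ Algebra.adjoin ℚ ({L, Linv, X} : Set (PowerSeries ℚ)),
      qD F ∈ Algebra.adjoin ℚ ({L, Linv, X} : Set (PowerSeries ℚ))) ∧
    Algebra.adjoin ℚ (({L, Linv} : Set (PowerSeries ℚ)) ∪ Set.range fun n => qD^[n] X) =
      Algebra.adjoin ℚ ({L, Linv, X} : Set (PowerSeries ℚ)) := by
  rw [← coe_qDerivation] at hX ⊢
  have hDL := qDerivation.map_eq_of_pow_three_mul_eq_one qDerivation_X hL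
  have hDLinv := qDerivation.leibniz_of_mul_eq_one ((mul_comm Linv L).trans hLinv)
  have hDX := qDerivation.riccati_of_mul_eq_map hL C1series_ode C1series_ne_zero hX
  rw [show ({L, Linv, X} : Set (PowerSeries ℚ)) = {L, Linv} ∪ {X} by
    rw [Set.insert_union, Set.singleton_union]]
  set S := Algebra.adjoin ℚ (({L, Linv} : Set (PowerSeries ℚ)) ∪ {X})
  have hL' : L ∈ S := Algebra.subset_adjoin (by simp)
  have hLinv' : Linv ∈ S := Algebra.subset_adjoin (by simp)
  have hX' : X ∈ S := Algebra.subset_adjoin (by simp)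
  have hDL' : qDerivation L ∈ S := by
    rw [hDL]
    exact Subalgebra.smul_mem _ (sub_mem (pow_mem hL' 4) hL') _
  have hclosed : ∀ F ∈ S, qDerivation F ∈ S := by
    refine fun F => qDerivation.map_mem_adjoin_of_map_mem ?_
    rintro _ ((rfl | rfl) | rfl)
    · exact hDL'
    · rw [hDLinv, smul_eq_mul]
      exact mul_mem (neg_mem (pow_mem hLinv' 2)) hDL'
    · rw [hDX]
      have hL3 := sub_mem (pow_mem hL' 3) (one_mem S)
      exact add_mem (sub_mem (mul_mem hL3 hX') (pow_mem hX' 2)) (Subalgebra.smul_mem _ hL3 _)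
  exact ⟨hDL, hDX, hclosed, Algebra.adjoin_union_range_iterate_eq hclosed⟩

/-- The smallest subring `R = ℚ[L,L⁻¹][X] ⊆ ℚ[[q]]` is closed under `D = q·d/dq`:
explicitly `DL = (L⁴−L)/3` and `DX = (L³−1)X − X² + (2/9)(L³−1)`, so the
differential ring generated by `X, DX, DDX, …` over `ℚ[L,L⁻¹]` is just
`ℚ[L,L⁻¹][X]`. -/
theorem stmt_1 (L Linv X : PowerSeries ℚ)
    (hL0 : PowerSeries.constantCoeff L = 1)
    (hL : L ^ 3 * (1 + 27 * PowerSeries.X) = 1)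
    (hLinv : L * Linv = 1)
    (hX : X * C1series = qD C1series) :
    qD L = (1 / 3 : ℚ) • (L ^ 4 - L) ∧
    qD X = (L ^ 3 - 1) * X - X ^ 2 + (2 / 9 : ℚ) • (L ^ 3 - 1) ∧
    (∀ F ∈ Algebra.adjoin ℚ ({L, Linv, X} : Set (PowerSeries ℚ)),
      qD F ∈ Algebra.adjoin ℚ ({L, Linv, X} : Set (PowerSeries ℚ))) ∧
    Algebra.adjoin ℚ (({L, Linv} : Set (PowerSeries ℚ)) ∪ Set.range fun n => qD^[n] X) =
      Algebra.adjoin ℚ ({L, Linv, X} : Set (PowerSeries ℚ)) :=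
  stmt_1_general L Linv X hL hLinv hX
end

section
/- For every n ≥ 3, the series F_n := ⟨⟨1,…,1⟩⟩_{0,n}|_{t_0=0} lies in the subring C[1/(1−t_1)][t_2,…,t_{n−2}] of C[[t_1,t_2,…]] (where 1/(1−t_1) = ∑_{m≥0} t_1^m), and, viewed in C(t_1)[t_2,t_3,…], F_n is homogeneous of degree n−3 for the grading over C(t_1) in which deg(t_i) = i−1 for i ≥ 2. -/
/-- Genus 0 ψ-class intersection numbers:
`⟨τ_{a_1}⋯τ_{a_n}⟩_0 = (n−3)!/(a_1!⋯a_n!)` if `a_1+⋯+a_n = n−3` (and `n ≥ 3`),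
and `0` otherwise. -/
noncomputable def tauInt (a : Multiset ℕ) : ℂ :=
  if a.sum + 3 = Multiset.card a then
    (Nat.factorial (Multiset.card a - 3) : ℂ) /
      ((a.map fun i => (Nat.factorial i : ℂ)).prod)
  else 0

/-- The genus 0 correlator `⟨⟨ψ^{a_1},…,ψ^{a_n}⟩⟩_{0,n}` as an element of
`ℂ[[t_0,t_1,t_2,…]]`: its coefficient at the monomial `∏ t_i^{m i}` equals
`⟨τ_{a_1}⋯τ_{a_n}∏τ_{b_j}⟩_0 / ∏_i (m i)!`, where the `b_j` run over the
multiset associated to `m`; this is the coefficient form of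
`∑_k (1/k!) ∑_{b_1,…,b_k} ⟨τ_{a_1}⋯τ_{a_n}τ_{b_1}⋯τ_{b_k}⟩_0 t_{b_1}⋯t_{b_k}`. -/
noncomputable def corr (a : Multiset ℕ) : MvPowerSeries ℕ ℂ :=
  fun m => tauInt (a + Finsupp.toMultiset m) / (m.prod fun _ e => (Nat.factorial e : ℂ))

/-- Restriction `t_0 = 0` of a power series in `t_0, t_1, t_2, …`. -/
noncomputable def setT0 (F : MvPowerSeries ℕ ℂ) : MvPowerSeries ℕ ℂ :=
  fun m => if m 0 = 0 then F m else 0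

/-- The geometric series `1/(1−t_1) = ∑_{m≥0} t_1^m`. -/
noncomputable def geom : MvPowerSeries ℕ ℂ :=
  fun m => if m.support ⊆ {1} then 1 else 0

/-!
At `t^m` with `m 0 = 0`, the coefficient of `F_n` is `tauInt` of `n` zeros and the multiset of `m`,
which is nonzero exactly when `∑ m_i (i - 1) = n - 3` and then equals `(n - 3 + |m|)! / ∏ i!^{m_i} m_i!`;
this is the homogeneity. Grouping monomials by their exponent `f` away from `t_1`, the `t_1`-part of
such a group is `∑_a C(N + a, N) t_1^a = (1 - t_1)^{-(N + 1)}` with `N = n - 3 + |f|`, and only the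
finitely many `f` of weight `n - 3`, all supported on `2, …, n - 2`, occur.
-/

open Finset

theorem PowerSeries.coeff_toMvPowerSeries {σ R : Type*} [CommSemiring R] [DecidableEq σ]
    (i : σ) (f : PowerSeries R) (m : σ →₀ ℕ) :
    MvPowerSeries.coeff m (f.toMvPowerSeries i) =
      if m.support ⊆ {i} then PowerSeries.coeff (m i) f else 0 := by
  split_ifs with h
  · obtain ⟨b, rfl⟩ := Finsupp.support_subset_singleton'.mp h
    have hrename := MvPowerSeries.coeff_embDomain_rename (R := R) (Function.Embedding.punit i) f
      (Finsupp.single () b)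
    rw [Finsupp.embDomain_single] at hrename
    rw [Finsupp.single_eq_same]
    exact hrename
  · apply MvPowerSeries.coeff_rename_eq_zero
    rintro ⟨d, rfl⟩
    refine h (Finsupp.mapDomain_support.trans fun j hj => ?_)
    obtain ⟨_, _, rfl⟩ := Finset.mem_image.mp hj
    exact Finset.mem_singleton_self i

theorem geom_eq_toMvPowerSeries : geom = (PowerSeries.mk 1).toMvPowerSeries 1 := by
  ext m
  rw [PowerSeries.coeff_toMvPowerSeries, PowerSeries.coeff_mk]
  rfl

theorem coeff_geom_pow (p : ℕ) (m : ℕ →₀ ℕ) :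
    MvPowerSeries.coeff m (geom ^ (p + 1)) =
      if m.support ⊆ {1} then ((p + m 1).choose p : ℂ) else 0 := by
  rw [geom_eq_toMvPowerSeries, ← map_pow, PowerSeries.mk_one_pow_eq_mk_choose_add,
    PowerSeries.coeff_toMvPowerSeries, PowerSeries.coeff_mk]

theorem Finsupp.le_and_support_tsub_subset_singleton_iff {ι : Type*} [DecidableEq ι]
    {f m : ι →₀ ℕ} {i : ι} (hf : f i = 0) :
    f ≤ m ∧ (m - f).support ⊆ {i} ↔ f = m.erase i := by
  constructor
  · rintro ⟨hle, hsupp⟩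
    ext j
    by_cases hj : j = i
    · subst hj; rw [Finsupp.erase_same, hf]
    · have : (m - f) j = 0 := by
        by_contra h
        exact hj (Finset.mem_singleton.mp (hsupp (Finsupp.mem_support_iff.mpr h)))
      rw [Finsupp.tsub_apply] at this
      rw [Finsupp.erase_ne hj]
      exact le_antisymm (hle j) (by omega)
  · rintro rfl
    refine ⟨fun j => ?_, fun j hj => ?_⟩
    · by_cases hj : j = i
      · subst hj; simp
      · simp [Finsupp.erase_ne hj]
    · by_contra hji
      rw [Finsupp.mem_support_iff, Finsupp.tsub_apply,
        Finsupp.erase_ne (Finset.notMem_singleton.mp hji)] at hj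
      exact hj (Nat.sub_self _)

theorem coeff_geom_pow_mul_monomial (p : ℕ) {f : ℕ →₀ ℕ} (hf : f 1 = 0) (m : ℕ →₀ ℕ) :
    MvPowerSeries.coeff m (geom ^ (p + 1) * MvPowerSeries.monomial f 1) =
      if f = m.erase 1 then ((p + m 1).choose p : ℂ) else 0 := by
  have hiff := Finsupp.le_and_support_tsub_subset_singleton_iff (m := m) hf
  rw [MvPowerSeries.coeff_mul_monomial, mul_one]
  by_cases h : f = m.erase 1
  · obtain ⟨hle, hs⟩ := hiff.mpr h
    rw [if_pos hle, if_pos h, coeff_geom_pow, if_pos hs, Finsupp.tsub_apply, hf, Nat.sub_zero]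
  · rw [if_neg h]
    split_ifs with hle
    · rw [coeff_geom_pow, if_neg fun hs => h (hiff.mp ⟨hle, hs⟩)]
    · rfl

theorem Finsupp.weight_erase {σ M : Type*} [AddCommMonoid M] (w : σ → M) {i : σ} (hi : w i = 0)
    (f : σ →₀ ℕ) : Finsupp.weight w (f.erase i) = Finsupp.weight w f := by
  conv_rhs => rw [← f.single_add_erase i]
  rw [map_add, Finsupp.weight_single, hi, smul_zero, zero_add]

theorem Finsupp.degree_eq_add_degree_erase {σ R : Type*} [AddCommMonoid R] (f : σ →₀ R) (i : σ) :
    f.degree = f i + (f.erase i).degree := by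
  conv_lhs => rw [← f.single_add_erase i]
  rw [map_add, Finsupp.degree_single]

theorem weight_id_eq_degree_add_weight_pred {m : ℕ →₀ ℕ} (h0 : m 0 = 0) :
    Finsupp.weight id m = m.degree + Finsupp.weight (fun i => i - 1) m := by
  rw [Finsupp.weight_apply, Finsupp.weight_apply, Finsupp.degree_apply, Finsupp.sum,
    Finsupp.sum, ← Finset.sum_add_distrib]
  refine Finset.sum_congr rfl fun i hi => ?_
  obtain ⟨j, rfl⟩ : ∃ j, i = j + 1 :=
    Nat.exists_eq_succ_of_ne_zero fun hi0 => Finsupp.mem_support_iff.mp hi (hi0 ▸ h0)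
  simp only [id, smul_eq_mul, Nat.add_sub_cancel]
  ring

theorem prod_factorial_replicate_zero_add_toMultiset (n : ℕ) (m : ℕ →₀ ℕ) :
    ((Multiset.replicate n 0 + Finsupp.toMultiset m).map fun i : ℕ => (i.factorial : ℂ)).prod =
      m.prod fun i e => (i.factorial : ℂ) ^ e := by
  rw [Multiset.map_add, Multiset.prod_add, Multiset.map_replicate, Multiset.prod_replicate,
    Nat.factorial_zero, Nat.cast_one, one_pow, one_mul, Finsupp.toMultiset_map,
    Finsupp.prod_toMultiset]
  exact Finsupp.prod_mapDomain_index (fun _ => pow_zero _) (fun _ _ _ => pow_add _ _ _)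

theorem tauInt_replicate_zero_add_toMultiset {n : ℕ} (hn : 3 ≤ n) {m : ℕ →₀ ℕ} (h0 : m 0 = 0) :
    tauInt (Multiset.replicate n 0 + Finsupp.toMultiset m) =
      if Finsupp.weight (fun i => i - 1) m = n - 3 then
        ((n - 3 + m.degree).factorial : ℂ) / m.prod fun i e => (i.factorial : ℂ) ^ e
      else 0 := by
  have hsum : (Multiset.replicate n 0 + Finsupp.toMultiset m).sum =
      m.degree + Finsupp.weight (fun i => i - 1) m := by
    rw [Multiset.sum_add, Multiset.sum_replicate, smul_zero, zero_add, Finsupp.sum_toMultiset,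
      ← weight_id_eq_degree_add_weight_pred h0]
    rfl
  have hcard : Multiset.card (Multiset.replicate n 0 + Finsupp.toMultiset m) = n + m.degree := by
    rw [Multiset.card_add, Multiset.card_replicate, Finsupp.card_toMultiset]
    rfl
  rw [tauInt, hsum, hcard, prod_factorial_replicate_zero_add_toMultiset]
  by_cases hw : Finsupp.weight (fun i => i - 1) m = n - 3
  · rw [if_pos (by omega), if_pos hw, show n + m.degree - 3 = n - 3 + m.degree by omega]
  · rw [if_neg (by omega), if_neg hw]

noncomputable def corrCoeff (d : ℕ) (m : ℕ →₀ ℕ) : ℂ :=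
  ((d + m.degree).factorial : ℂ) / m.prod fun i e => (i.factorial : ℂ) ^ e * (e.factorial : ℂ)

theorem coeff_setT0_corr_replicate_zero {n : ℕ} (hn : 3 ≤ n) (m : ℕ →₀ ℕ) :
    MvPowerSeries.coeff m (setT0 (corr (Multiset.replicate n 0))) =
      if m 0 = 0 ∧ Finsupp.weight (fun i => i - 1) m = n - 3 then corrCoeff (n - 3) m else 0 := by
  change (if m 0 = 0 then tauInt _ / _ else 0) = _
  by_cases h0 : m 0 = 0
  · rw [if_pos h0, tauInt_replicate_zero_add_toMultiset hn h0]
    by_cases hw : Finsupp.weight (fun i => i - 1) m = n - 3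
    · rw [if_pos hw, if_pos ⟨h0, hw⟩, corrCoeff, Finsupp.prod_mul, div_div]
    · rw [if_neg hw, if_neg fun h => hw h.2, zero_div]
  · rw [if_neg h0, if_neg fun h => h0 h.1]

theorem corrCoeff_eq_mul_choose (d : ℕ) (m : ℕ →₀ ℕ) :
    corrCoeff d m = corrCoeff d (m.erase 1) *
      ((d + (m.erase 1).degree + m 1).choose (d + (m.erase 1).degree) : ℂ) := by
  have hdeg : d + m.degree = m 1 + (d + (m.erase 1).degree) := by
    rw [Finsupp.degree_eq_add_degree_erase m 1]
    omega
  have hprod : (m.prod fun i e => (i.factorial : ℂ) ^ e * (e.factorial : ℂ)) =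
      (m 1).factorial * (m.erase 1).prod fun i e => (i.factorial : ℂ) ^ e * (e.factorial : ℂ) := by
    rw [← Finsupp.mul_prod_erase' m 1 _ (fun _ => by simp)]
    simp
  have hP : ((m.erase 1).prod fun i e => (i.factorial : ℂ) ^ e * (e.factorial : ℂ)) ≠ 0 :=
    Finset.prod_ne_zero_iff.mpr fun i _ => by simp [Nat.factorial_ne_zero]
  rw [corrCoeff, corrCoeff, hdeg, hprod, ← Nat.add_choose_mul_factorial_mul_factorial, add_comm (d + _)]
  have h1 : ((m 1).factorial : ℂ) ≠ 0 := Nat.cast_ne_zero.mpr (Nat.factorial_ne_zero _)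
  push_cast
  field_simp

noncomputable def exponentsOfWeight (d : ℕ) : Finset (ℕ →₀ ℕ) :=
  ((Icc 2 (d + 1)).finsupp fun _ => Iic d).filter fun f => Finsupp.weight (fun i => i - 1) f = d

theorem support_subset_Icc_of_mem_exponentsOfWeight {d : ℕ} {f : ℕ →₀ ℕ}
    (hf : f ∈ exponentsOfWeight d) : f.support ⊆ Icc 2 (d + 1) :=
  (mem_finsupp_iff.mp (mem_filter.mp hf).1).1

theorem mem_exponentsOfWeight {d : ℕ} {f : ℕ →₀ ℕ} :
    f ∈ exponentsOfWeight d ↔ f 0 = 0 ∧ f 1 = 0 ∧ Finsupp.weight (fun i => i - 1) f = d := by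
  constructor
  · intro hf
    have hlt : ∀ i < 2, f i = 0 := fun i hi => Finsupp.notMem_support_iff.mp fun h =>
      by have := mem_Icc.mp (support_subset_Icc_of_mem_exponentsOfWeight hf h); omega
    exact ⟨hlt 0 (by norm_num), hlt 1 (by norm_num), (mem_filter.mp hf).2⟩
  · rintro ⟨h0, h1, hw⟩
    refine mem_filter.mpr ⟨mem_finsupp_iff.mpr ⟨fun i hi => ?_, fun i hi => ?_⟩, hw⟩
    · have hfi := Finsupp.mem_support_iff.mp hi
      have hi0 : i ≠ 0 := by rintro rfl; exact hfi h0
      have hi1 : i ≠ 1 := by rintro rfl; exact hfi h1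
      have := hw ▸ Finsupp.le_weight_of_ne_zero' (fun i => i - 1) hfi
      exact mem_Icc.mpr ⟨by omega, by omega⟩
    · have := (mem_Icc.mp hi).1
      exact mem_Iic.mpr (hw ▸ Finsupp.le_weight _ (by omega) f)

theorem setT0_corr_replicate_zero_eq_sum {n : ℕ} (hn : 3 ≤ n) :
    setT0 (corr (Multiset.replicate n 0)) = ∑ f ∈ exponentsOfWeight (n - 3),
      corrCoeff (n - 3) f • (geom ^ (n - 3 + f.degree + 1) * MvPowerSeries.monomial f 1) := by
  classical
  ext m
  have hterm : ∀ f ∈ exponentsOfWeight (n - 3),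
      MvPowerSeries.coeff m
        (corrCoeff (n - 3) f • (geom ^ (n - 3 + f.degree + 1) * MvPowerSeries.monomial f 1)) =
      if f = m.erase 1 then
        corrCoeff (n - 3) (m.erase 1) *
          ((n - 3 + (m.erase 1).degree + m 1).choose (n - 3 + (m.erase 1).degree) : ℂ)
      else 0 := by
    intro f hf
    rw [MvPowerSeries.coeff_smul, coeff_geom_pow_mul_monomial _ (mem_exponentsOfWeight.mp hf).2.1]
    split_ifs with h
    · rw [h]
    · rw [mul_zero]
  have hmem : m.erase 1 ∈ exponentsOfWeight (n - 3) ↔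
      m 0 = 0 ∧ Finsupp.weight (fun i => i - 1) m = n - 3 := by
    rw [mem_exponentsOfWeight, Finsupp.erase_ne zero_ne_one, Finsupp.erase_same,
      Finsupp.weight_erase (fun i => i - 1) (Nat.sub_self 1), eq_self, true_and]
  rw [coeff_setT0_corr_replicate_zero hn, map_sum, sum_congr rfl hterm, sum_ite_eq',
    ← corrCoeff_eq_mul_choose]
  exact if_congr hmem.symm rfl rfl

/-- For `n ≥ 3`, `F_n = ⟨⟨1,…,1⟩⟩_{0,n}|_{t_0=0}` lies in the subring
`ℂ[1/(1−t_1)][t_2,…,t_{n−2}]`, and is homogeneous of degree `n−3` for the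
grading over `ℂ(t_1)` with `deg(t_i) = i−1` for `i ≥ 2`. -/
theorem stmt_11 (n : ℕ) (hn : 3 ≤ n) :
    setT0 (corr (Multiset.replicate n 0)) ∈
      Algebra.adjoin ℂ
        ({geom} ∪ {F : MvPowerSeries ℕ ℂ | ∃ i, 2 ≤ i ∧ i ≤ n - 2 ∧ F = MvPowerSeries.X i}) ∧
    ∀ m : ℕ →₀ ℕ,
      MvPowerSeries.coeff m (setT0 (corr (Multiset.replicate n 0))) ≠ 0 →
      (m.sum fun i e => e * (i - 1)) = n - 3 := by
  refine ⟨?_, fun m hm => ?_⟩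
  · rw [setT0_corr_replicate_zero_eq_sum hn]
    refine Subalgebra.sum_mem _ fun f hf => Subalgebra.smul_mem _ (Subalgebra.mul_mem _ ?_ ?_) _
    · exact Subalgebra.pow_mem _ (Algebra.subset_adjoin (Set.mem_union_left _ (Set.mem_singleton _))) _
    · rw [MvPowerSeries.monomial_one_eq]
      refine Subalgebra.prod_mem _ fun i hi => Subalgebra.pow_mem _ (Algebra.subset_adjoin ?_) _
      have hi := mem_Icc.mp (support_subset_Icc_of_mem_exponentsOfWeight hf hi)
      exact Set.mem_union_right _ ⟨i, hi.1, by omega, rfl⟩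
  · rw [coeff_setT0_corr_replicate_zero hn] at hm
    by_contra hw
    exact hm (if_neg fun h => hw h.2)
end
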